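/- If G is an infinite finitely generated group, then its word problem W(G) ⊆ Σ* is not a regular language. -/
import Mathlib


private lemma theta_inv_word {α G : Type*} [Group G] (θ : FreeMonoid α →* G)
    (inv : α → α) (hinv : ∀ s, θ (FreeMonoid.of (inv s)) = (θ (FreeMonoid.of s))⁻¹) :
    ∀ w : List α, θ (FreeMonoid.ofList ((w.map inv).reverse)) = (θ (FreeMonoid.ofList w))⁻¹ := by
  intro w
  induction w with
  | nil => simp
  | cons a t ih =>
    have h1 : FreeMonoid.ofList ((a :: t).map inv).reverse
        = FreeMonoid.ofList ((t.map inv).reverse) * FreeMonoid.of (inv a) := by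
      simp [FreeMonoid.ofList, FreeMonoid.of]
      rfl
    have h2 : FreeMonoid.ofList (a :: t) = FreeMonoid.of a * FreeMonoid.ofList t := rfl
    rw [h1, h2, map_mul, map_mul, ih, hinv, mul_inv_rev]

/-- If `G` is an infinite finitely generated group (generated by the images of
a finite alphabet `α` closed under taking inverses), then its word problem
`W(G) = {w ∈ α* : θ(w) = 1}` is not a regular language. -/
theorem word_problem_not_regular_of_infinite {α G : Type*} [Fintype α] [Group G]
    [Infinite G] (θ : FreeMonoid α →* G) (hsurj : Function.Surjective θ)
    (inv : α → α) (hinv : ∀ s, θ (FreeMonoid.of (inv s)) = (θ (FreeMonoid.of s))⁻¹) :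
    ¬ Language.IsRegular {w : List α | θ (FreeMonoid.ofList w) = 1} := by
  rintro ⟨σ, hσ, M, hM⟩
  -- choose a word for each group element
  choose wd hwd using hsurj
  -- the map g ↦ M.eval (word for g) is injective
  have hinj : Function.Injective (fun g : G => M.eval (FreeMonoid.toList (wd g))) := by
    intro g₁ g₂ h
    simp only at h
    set x₁ := FreeMonoid.toList (wd g₁)
    set x₂ := FreeMonoid.toList (wd g₂)
    have hx₁ : θ (FreeMonoid.ofList x₁) = g₁ := by simpa [x₁] using hwd g₁
    have hx₂ : θ (FreeMonoid.ofList x₂) = g₂ := by simpa [x₂] using hwd g₂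
    set v := (x₁.map inv).reverse
    have hv : θ (FreeMonoid.ofList v) = g₁⁻¹ := by
      rw [theta_inv_word θ inv hinv, hx₁]
    have hmem : ∀ x : List α, x ∈ M.accepts ↔ θ (FreeMonoid.ofList x) = 1 := by
      intro x
      rw [hM]; rfl
    have key : ∀ x : List α, (M.eval (x ++ v) ∈ M.accept) ↔
        θ (FreeMonoid.ofList x) * g₁⁻¹ = 1 := by
      intro x
      rw [← DFA.mem_accepts, hmem]
      have : FreeMonoid.ofList (x ++ v) = FreeMonoid.ofList x * FreeMonoid.ofList v := rfl
      rw [this, map_mul, hv]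
    have e1 : M.eval (x₁ ++ v) = M.eval (x₂ ++ v) := by
      rw [DFA.eval, DFA.evalFrom_of_append, DFA.evalFrom_of_append]
      exact congrArg (fun s => M.evalFrom s v) h
    have a1 : θ (FreeMonoid.ofList x₁) * g₁⁻¹ = 1 := by rw [hx₁, mul_inv_cancel]
    have a2 : θ (FreeMonoid.ofList x₂) * g₁⁻¹ = 1 := by
      rw [← key]; rw [← e1]; rw [key]; exact a1
    rw [hx₂] at a2
    have : g₂ = g₁ := by
      have := mul_eq_one_iff_eq_inv.mp a2
      simpa using this
    exact this.symm
  have : Finite G := Finite.of_injective _ hinj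
  exact not_finite G
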